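/- Let μ be a probability measure on Ω, let X be the Boolean sensitivity indicator of a record with μ(X = 0) > 0 and μ(X = 1) > 0, and let M be the release indicator produced by the OSDPRR mechanism with parameter ε > 0 for X. Then the mechanism satisfies ε-freedom from exclusion attacks: for every outcome m ∈ {0,1} with μ(M = m) > 0, P(X = 0 | M = m) / P(X = 1 | M = m) ≤ e^ε · μ(X = 0) / μ(X = 1). -/

import Mathlib

/-!
A sensitive record is never released, so on release the posterior odds of "sensitive" are zero.
Withholding keeps all of the sensitive mass but only the fraction `e^{-ε}` of the non-sensitive
mass, so on withholding the odds are multiplied by exactly `e^ε`.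
-/

open MeasureTheory Real

/-- Conditional probability `P(A | B) = μ(A ∩ B) / μ(B)`, as a real number. -/
noncomputable def condProb {Ω : Type*} [MeasurableSpace Ω] (μ : Measure Ω) (A B : Set Ω) : ℝ :=
  (μ (A ∩ B)).toReal / (μ B).toReal

theorem setOf_eq_false_eq_compl {Ω : Type*} (M : Ω → Bool) :
    {ω | M ω = false} = {ω | M ω = true}ᶜ :=
  Set.ext fun _ => by simp

section

variable {Ω : Type*} [MeasurableSpace Ω] {μ : Measure Ω}

theorem condProb_div_condProb [IsFiniteMeasure μ] {A A' B : Set Ω} (hB : μ B ≠ 0) :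
    condProb μ A B / condProb μ A' B = (μ (A ∩ B)).toReal / (μ (A' ∩ B)).toReal :=
  div_div_div_cancel_right₀ (ENNReal.toReal_ne_zero.2 ⟨hB, measure_ne_top μ B⟩) _ _

theorem condProb_eq_zero_of_inter_null {A B : Set Ω} (h : μ (B ∩ A) = 0) :
    condProb μ A B = 0 := by
  rw [condProb, Set.inter_comm, h, ENNReal.toReal_zero, zero_div]

theorem toReal_measure_sdiff [IsFiniteMeasure μ] (A : Set Ω) {T : Set Ω} (hT : MeasurableSet T) :
    (μ (A \ T)).toReal = (μ A).toReal - (μ (T ∩ A)).toReal := by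
  rw [Set.inter_comm]
  exact eq_sub_of_add_eq (measureReal_sdiff_add_inter hT)

end

theorem osdprr_freedom_from_exclusion_general {Ω : Type*} [MeasurableSpace Ω]
    (μ : Measure Ω) [IsProbabilityMeasure μ]
    (X M : Ω → Bool) (hMmeas : Measurable M)
    (ε : ℝ)
    -- OSDPRR: a sensitive record is never released
    (hrel0 : μ {ω | M ω = true ∧ X ω = false} = 0)
    -- OSDPRR: a non-sensitive record is released with probability 1 - e^{-ε}
    (hrel1 : (μ {ω | M ω = true ∧ X ω = true}).toReal
        = (1 - Real.exp (-ε)) * (μ {ω | X ω = true}).toReal) :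
    ∀ m : Bool, 0 < μ {ω | M ω = m} →
      condProb μ {ω | X ω = false} {ω | M ω = m}
          / condProb μ {ω | X ω = true} {ω | M ω = m}
        ≤ Real.exp ε * ((μ {ω | X ω = false}).toReal / (μ {ω | X ω = true}).toReal) := by
  intro m hm
  have hsens_unreleased : μ ({ω | M ω = true} ∩ {ω | X ω = false}) = 0 := hrel0
  cases m with
  | true =>
    rw [condProb_eq_zero_of_inter_null hsens_unreleased, zero_div]
    positivity
  | false =>
    have hT : MeasurableSet {ω | M ω = true} := hMmeas (measurableSet_singleton true)
    have hsens : μ ({ω | X ω = false} \ {ω | M ω = true}) = μ {ω | X ω = false} :=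
      measure_sdiff_null' (by rwa [Set.inter_comm])
    have hnonsens : (μ ({ω | X ω = true} \ {ω | M ω = true})).toReal
        = Real.exp (-ε) * (μ {ω | X ω = true}).toReal := by
      rw [toReal_measure_sdiff _ hT, Set.inter_def]
      simp only [Set.mem_ofPred_eq, hrel1]
      ring
    rw [condProb_div_condProb hm.ne', setOf_eq_false_eq_compl M, ← Set.sdiff_eq, ← Set.sdiff_eq,
      hsens, hnonsens, Real.exp_neg]
    exact le_of_eq (by field_simp)

/-- The OSDPRR mechanism with parameter `ε > 0` satisfies `ε`-freedom from
exclusion attacks: for every possible outcome `m ∈ {0,1}` of the release indicator with positive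
probability, the posterior odds of the record being sensitive given the outcome are at most
`e^ε` times the prior odds. -/
theorem osdprr_freedom_from_exclusion {Ω : Type*} [MeasurableSpace Ω]
    (μ : Measure Ω) [IsProbabilityMeasure μ]
    (X M : Ω → Bool) (hXmeas : Measurable X) (hMmeas : Measurable M)
    (ε : ℝ) (hε : 0 < ε)
    (hX0 : 0 < μ {ω | X ω = false}) (hX1 : 0 < μ {ω | X ω = true})
    -- OSDPRR: a sensitive record is never released
    (hrel0 : μ {ω | M ω = true ∧ X ω = false} = 0)
    -- OSDPRR: a non-sensitive record is released with probability 1 - e^{-ε}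
    (hrel1 : (μ {ω | M ω = true ∧ X ω = true}).toReal
        = (1 - Real.exp (-ε)) * (μ {ω | X ω = true}).toReal) :
    ∀ m : Bool, 0 < μ {ω | M ω = m} →
      condProb μ {ω | X ω = false} {ω | M ω = m}
          / condProb μ {ω | X ω = true} {ω | M ω = m}
        ≤ Real.exp ε * ((μ {ω | X ω = false}).toReal / (μ {ω | X ω = true}).toReal) :=
  osdprr_freedom_from_exclusion_general μ X M hMmeas ε hrel0 hrel1
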